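/- arXiv:2007.06365 — 2 statements merged into one kernel-verified Lean document; each statement's English description precedes it below -/
import Mathlib

section
/- Let m ≥ 2 and n ≥ 1 be integers and let W = (1/m)·A, where A is the (n+1)×(n+1) real matrix with A 0 j = m−1 for 0 ≤ j ≤ n−1, A 0 n = 0, and for 1 ≤ i ≤ n: A i j = 1 if j = i−1 and 0 otherwise. Then (∑_{k=0}^∞ k²·(W^k)_{n,0}) − (∑_{k=0}^∞ k·(W^k)_{n,0})² = (m/(m−1)²)·(m^{2n+1} − (2n+1)·m^{n+1} + (2n+1)·m^n − 1). -/
/-!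
Let `p k = (W ^ k) n 0` and let `T k` be the sum of the other entries of column `0` of `W ^ k`,
the probability that no run has occurred among the first `k` letters. The columns of `W` indexed
below `n` sum to `1`, so `T (k + 1) + p (k + 1) = T k`. The subdiagonal of `W` moves column `0`
down one row per step, scaled by `m⁻¹`, so `p (k + n + 1) = m⁻¹ ^ n * (W ^ (k + 1)) 0 0 = c * T k`
with `c = (m - 1) / m ^ (n + 1)`, while `p k = 0` for `k < n` and `p n = m⁻¹ ^ n`. Evaluating
`∑ kᵈ p k` once by parts and once through this shift gives linear equations for `∑ T k` and
`∑ k T k`, and then `E ξ = ∑ T k` and `E ξ² = ∑ (2k + 1) T k`. All series converge because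
`T (k + n) ≤ (1 - c) ^ k`.
-/

open Finset

noncomputable def runMatrix (m n : ℕ) : Matrix (Fin (n + 1)) (Fin (n + 1)) ℝ :=
  (1 / (m : ℝ)) • Matrix.of fun i j : Fin (n + 1) =>
    if (i : ℕ) = 0 then (if (j : ℕ) < n then (m : ℝ) - 1 else 0)
    else (if (j : ℕ) + 1 = (i : ℕ) then 1 else 0)

noncomputable def hitProb (m n k : ℕ) : ℝ := (runMatrix m n ^ k) (Fin.last n) 0

/-- For `i < n`, `(runMatrix m n ^ k) i 0` is the probability that the first `k` letters contain
no run of length `n` and end with a run of length exactly `i`. -/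
noncomputable def survivalProb (m n k : ℕ) : ℝ :=
  ∑ i : Fin n, (runMatrix m n ^ k) i.castSucc 0

namespace runMatrix

variable {m n : ℕ}

lemma zero_apply (j : Fin (n + 1)) :
    runMatrix m n 0 j = if (j : ℕ) < n then ((m : ℝ) - 1) / m else 0 := by
  simp only [runMatrix, Matrix.smul_apply, Matrix.of_apply, Fin.val_zero, if_true, smul_eq_mul]
  split_ifs <;> ring

lemma succ_apply (i : Fin n) (j : Fin (n + 1)) :
    runMatrix m n i.succ j = if j = i.castSucc then 1 / (m : ℝ) else 0 := by
  simp only [runMatrix, Matrix.smul_apply, Matrix.of_apply, Fin.val_succ, smul_eq_mul,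
    Nat.succ_ne_zero, if_false, Nat.add_right_cancel_iff, Fin.ext_iff, Fin.val_castSucc]
  split_ifs <;> simp

lemma nonneg (hm : 1 ≤ m) (i j : Fin (n + 1)) : 0 ≤ runMatrix m n i j := by
  have : (1 : ℝ) ≤ m := by exact_mod_cast hm
  simp only [runMatrix, Matrix.smul_apply, Matrix.of_apply, smul_eq_mul]
  split_ifs <;> positivity

lemma pow_nonneg (hm : 1 ≤ m) (k : ℕ) (i j : Fin (n + 1)) : 0 ≤ (runMatrix m n ^ k) i j := by
  induction k generalizing i with
  | zero => rw [pow_zero, Matrix.one_apply]; split_ifs <;> norm_num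
  | succ k ih =>
    rw [pow_succ', Matrix.mul_apply]
    exact sum_nonneg fun l _ => mul_nonneg (nonneg hm i l) (ih l)

lemma pow_succ_apply_zero (k : ℕ) :
    (runMatrix m n ^ (k + 1)) 0 0 = ((m : ℝ) - 1) / m * survivalProb m n k := by
  rw [pow_succ', Matrix.mul_apply, Fin.sum_univ_castSucc, survivalProb, mul_sum]
  simp [zero_apply]

lemma pow_succ_apply_succ (k : ℕ) (i : Fin n) :
    (runMatrix m n ^ (k + 1)) i.succ 0 = 1 / (m : ℝ) * (runMatrix m n ^ k) i.castSucc 0 := by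
  simp [pow_succ', Matrix.mul_apply, succ_apply]

lemma pow_add_apply (k j i : ℕ) (h : i + j ≤ n) :
    (runMatrix m n ^ (k + j)) ⟨i + j, by omega⟩ 0
      = (1 / m : ℝ) ^ j * (runMatrix m n ^ k) ⟨i, by omega⟩ 0 := by
  induction j with
  | zero => simp
  | succ j ih =>
    have step := pow_succ_apply_succ (m := m) (n := n) (k + j) ⟨i + j, by omega⟩
    simp only [Fin.succ_mk, Fin.castSucc_mk] at step
    calc _ = (runMatrix m n ^ (k + j + 1)) ⟨i + j + 1, by omega⟩ 0 := rfl
      _ = _ := by rw [step, ih (by omega), pow_succ]; ring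

end runMatrix

lemma tsum_mul_sub_succ {w T : ℕ → ℝ} (hw : Summable fun k => w k * T k)
    (hw' : Summable fun k => w (k + 1) * T k) :
    ∑' k, w (k + 1) * (T k - T (k + 1)) = w 0 * T 0 + ∑' k, (w (k + 1) - w k) * T k := by
  have hw'' : Summable fun k => w (k + 1) * T (k + 1) := (summable_nat_add_iff 1).2 hw
  simp only [mul_sub, sub_mul]
  rw [hw'.tsum_sub hw'', hw'.tsum_sub hw, hw.tsum_eq_zero_add]
  ring

lemma summable_add_pow_mul {f : ℕ → ℝ} (hf : ∀ d, Summable fun k : ℕ => (k : ℝ) ^ d * f k)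
    (a : ℝ) (d : ℕ) : Summable fun k : ℕ => ((k : ℝ) + a) ^ d * f k := by
  simp only [add_pow, sum_mul]
  refine summable_sum fun i _ => ?_
  simpa only [mul_right_comm _ _ (f _), mul_assoc] using
    (hf i).mul_right (a ^ (d - i) * (d.choose i))

lemma summable_pow_mul_of_le_geometric {T : ℕ → ℝ} {ρ : ℝ} {N : ℕ} (hT : ∀ k, 0 ≤ T k)
    (hρ : 0 ≤ ρ) (hρ' : ρ < 1) (hle : ∀ k, T (k + N) ≤ ρ ^ k) (d : ℕ) :
    Summable fun k : ℕ => (k : ℝ) ^ d * T k := by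
  have hgeom : ∀ d, Summable fun k : ℕ => (k : ℝ) ^ d * ρ ^ k := fun d =>
    summable_pow_mul_geometric_of_norm_lt_one d (by rwa [Real.norm_of_nonneg hρ])
  refine (summable_nat_add_iff N).1 <|
    (summable_add_pow_mul hgeom N d).of_nonneg_of_le (fun k => by positivity [hT (k + N)]) ?_
  intro k
  push_cast
  exact mul_le_mul_of_nonneg_left (hle k) (by positivity)

section

variable {m n : ℕ}

lemma sub_one_div_pow_succ_le_one (hm : 1 ≤ m) : ((m : ℝ) - 1) / m ^ (n + 1) ≤ 1 := by
  have hm' : (1 : ℝ) ≤ m := by exact_mod_cast hm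
  rw [div_le_one (by positivity)]
  linarith [le_self_pow₀ hm' (by omega : n + 1 ≠ 0)]

lemma survivalProb_zero (hn : 1 ≤ n) : survivalProb m n 0 = 1 := by
  obtain ⟨n, rfl⟩ : ∃ n', n = n' + 1 := ⟨n - 1, by omega⟩
  simp [survivalProb, Matrix.one_apply]

lemma hitProb_of_lt {k : ℕ} (hk : k < n) : hitProb m n k = 0 := by
  have h := runMatrix.pow_add_apply (m := m) (n := n) 0 k (n - k) (by omega)
  simp only [zero_add, Nat.sub_add_cancel hk.le, pow_zero, Matrix.one_apply] at h
  rw [hitProb, Fin.last, h, if_neg (by simp [Fin.ext_iff]; omega), mul_zero]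

lemma hitProb_self : hitProb m n n = (1 / m : ℝ) ^ n := by
  have h := runMatrix.pow_add_apply (m := m) (n := n) 0 n 0 (zero_add n).le
  simp only [zero_add, pow_zero] at h
  rw [hitProb, Fin.last, h, show (⟨0, _⟩ : Fin (n + 1)) = 0 from rfl, Matrix.one_apply_eq, mul_one]

lemma hitProb_add_succ (k : ℕ) :
    hitProb m n (k + n + 1) = ((m : ℝ) - 1) / m ^ (n + 1) * survivalProb m n k := by
  have h := runMatrix.pow_add_apply (m := m) (n := n) (k + 1) n 0 (zero_add n).le
  simp only [zero_add] at h
  rw [hitProb, Fin.last, add_right_comm, h, show (⟨0, _⟩ : Fin (n + 1)) = 0 from rfl,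
    runMatrix.pow_succ_apply_zero]
  field_simp
  ring

lemma survivalProb_succ_add_hitProb (hm : m ≠ 0) (k : ℕ) :
    survivalProb m n (k + 1) + hitProb m n (k + 1) = survivalProb m n k := by
  have hm' : (m : ℝ) ≠ 0 := by exact_mod_cast hm
  calc survivalProb m n (k + 1) + hitProb m n (k + 1)
      = ∑ i, (runMatrix m n ^ (k + 1)) i 0 :=
        (Fin.sum_univ_castSucc fun i => (runMatrix m n ^ (k + 1)) i 0).symm
    _ = ((m : ℝ) - 1) / m * survivalProb m n k + 1 / m * survivalProb m n k := by
      simp only [Fin.sum_univ_succ, runMatrix.pow_succ_apply_zero, runMatrix.pow_succ_apply_succ,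
        ← mul_sum, survivalProb]
    _ = survivalProb m n k := by field_simp; ring

lemma hitProb_nonneg (hm : 1 ≤ m) (k : ℕ) : 0 ≤ hitProb m n k :=
  runMatrix.pow_nonneg hm k _ _

lemma survivalProb_nonneg (hm : 1 ≤ m) (k : ℕ) : 0 ≤ survivalProb m n k :=
  sum_nonneg fun _ _ => runMatrix.pow_nonneg hm k _ _

lemma survivalProb_antitone (hm : 1 ≤ m) : Antitone (survivalProb m n) :=
  antitone_nat_of_succ_le fun k => by
    linarith [survivalProb_succ_add_hitProb (m := m) (n := n) (by omega) k,
      hitProb_nonneg (n := n) hm (k + 1)]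

lemma survivalProb_add_le_pow (hm : 1 ≤ m) (hn : 1 ≤ n) (k : ℕ) :
    survivalProb m n (k + n) ≤ (1 - ((m : ℝ) - 1) / m ^ (n + 1)) ^ k := by
  have hc : 0 ≤ ((m : ℝ) - 1) / m ^ (n + 1) :=
    div_nonneg (sub_nonneg.2 (by exact_mod_cast hm)) (by positivity)
  have hρ := sub_nonneg.2 (sub_one_div_pow_succ_le_one (n := n) hm)
  have step : ∀ j, survivalProb m n (j + 1 + n) ≤
      (1 - ((m : ℝ) - 1) / m ^ (n + 1)) * survivalProb m n (j + n) := fun j => by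
    have hrec := survivalProb_succ_add_hitProb (n := n) (by omega : m ≠ 0) (j + n)
    rw [hitProb_add_succ] at hrec
    have := survivalProb_antitone (n := n) hm (Nat.le_add_right j n)
    rw [add_right_comm]
    linarith [mul_le_mul_of_nonneg_left this hc]
  calc survivalProb m n (k + n)
      ≤ (1 - ((m : ℝ) - 1) / m ^ (n + 1)) ^ k * survivalProb m n (0 + n) :=
        le_geom (u := fun j => survivalProb m n (j + n)) hρ k fun j _ => step j
    _ ≤ _ := by
      refine mul_le_of_le_one_right (by positivity) ?_
      exact (survivalProb_antitone hm (Nat.zero_le _)).trans (survivalProb_zero hn).le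

lemma summable_pow_mul_survivalProb (hm : 2 ≤ m) (hn : 1 ≤ n) (d : ℕ) :
    Summable fun k : ℕ => (k : ℝ) ^ d * survivalProb m n k := by
  have hm' : (2 : ℝ) ≤ m := by exact_mod_cast hm
  have hc : 0 < ((m : ℝ) - 1) / m ^ (n + 1) := div_pos (by linarith) (by positivity)
  have hc' := sub_one_div_pow_succ_le_one (n := n) (by omega : 1 ≤ m)
  exact summable_pow_mul_of_le_geometric (survivalProb_nonneg (by omega)) (by linarith)
    (by linarith) (survivalProb_add_le_pow (by omega) hn) d

lemma summable_pow_mul_hitProb (hm : 2 ≤ m) (hn : 1 ≤ n) (d : ℕ) :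
    Summable fun k : ℕ => (k : ℝ) ^ d * hitProb m n k := by
  refine (summable_nat_add_iff (n + 1)).1 ?_
  simpa [← add_assoc, hitProb_add_succ, mul_left_comm _ (((m : ℝ) - 1) / _)] using
    (summable_add_pow_mul (summable_pow_mul_survivalProb hm hn) (n + 1) d).mul_left
      (((m : ℝ) - 1) / m ^ (n + 1))

lemma tsum_pow_mul_hitProb_by_parts (hm : 2 ≤ m) (hn : 1 ≤ n) (d : ℕ) :
    ∑' k : ℕ, (k : ℝ) ^ d * hitProb m n k
      = (0 : ℝ) ^ d + ∑' k : ℕ, (((k : ℝ) + 1) ^ d - (k : ℝ) ^ d) * survivalProb m n k := by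
  have hp : ∀ k, hitProb m n (k + 1) = survivalProb m n k - survivalProb m n (k + 1) := fun k => by
    linarith [survivalProb_succ_add_hitProb (m := m) (n := n) (by omega) k]
  have hS := summable_pow_mul_survivalProb hm hn
  rw [(summable_pow_mul_hitProb hm hn d).tsum_eq_zero_add, hitProb_of_lt (by omega), mul_zero,
    zero_add]
  simp only [hp]
  convert tsum_mul_sub_succ (w := fun k : ℕ => (k : ℝ) ^ d) (hS d) ?_ using 2 <;>
    simp [survivalProb_zero hn]
  simpa using summable_add_pow_mul hS 1 d

lemma tsum_pow_mul_hitProb_by_shift (hm : 2 ≤ m) (hn : 1 ≤ n) (d : ℕ) :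
    ∑' k : ℕ, (k : ℝ) ^ d * hitProb m n k
      = (n : ℝ) ^ d * (1 / m : ℝ) ^ n
        + ((m : ℝ) - 1) / m ^ (n + 1) * ∑' k : ℕ, ((k : ℝ) + (n + 1)) ^ d * survivalProb m n k := by
  rw [← (summable_pow_mul_hitProb hm hn d).sum_add_tsum_nat_add (n + 1), sum_range_succ,
    sum_eq_zero fun k hk => by rw [hitProb_of_lt (mem_range.1 hk), mul_zero], hitProb_self,
    zero_add, ← tsum_mul_left]
  congr 2 with k
  rw [← add_assoc, hitProb_add_succ]
  push_cast
  ring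

lemma tsum_linear_mul_survivalProb (hm : 2 ≤ m) (hn : 1 ≤ n) (a b : ℝ) :
    ∑' k : ℕ, (a * k + b) * survivalProb m n k
      = a * ∑' k : ℕ, (k : ℝ) * survivalProb m n k + b * ∑' k, survivalProb m n k := by
  have hS := summable_pow_mul_survivalProb hm hn
  simp only [add_mul, mul_assoc]
  rw [((by simpa using hS 1 : Summable _).mul_left a).tsum_add
    ((by simpa using hS 0 : Summable _).mul_left b), tsum_mul_left, tsum_mul_left]

lemma tsum_survivalProb (hm : 2 ≤ m) (hn : 1 ≤ n) :
    ∑' k, survivalProb m n k = m * ((m : ℝ) ^ n - 1) / (m - 1) := by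
  have hm' : (2 : ℝ) ≤ m := by exact_mod_cast hm
  have hparts := tsum_pow_mul_hitProb_by_parts hm hn 0
  have hshift := tsum_pow_mul_hitProb_by_shift hm hn 0
  simp only [pow_zero, one_mul, sub_self, zero_mul, tsum_zero, add_zero] at hparts hshift
  rw [hparts, one_div, inv_pow] at hshift
  rw [eq_div_iff (by linarith)]
  refine mul_left_cancel₀ (pow_ne_zero n (by positivity : (m : ℝ) ≠ 0)) ?_
  field_simp at hshift
  linear_combination -hshift

lemma tsum_mul_survivalProb (hm : 2 ≤ m) (hn : 1 ≤ n) :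
    ∑' k : ℕ, (k : ℝ) * survivalProb m n k
      = m ^ 2 * (m : ℝ) ^ n * ((m : ℝ) ^ n - 1) / (m - 1) ^ 2 - m * n / (m - 1)
        - (n + 1) * (m * ((m : ℝ) ^ n - 1) / (m - 1)) := by
  have hm' : (2 : ℝ) ≤ m := by exact_mod_cast hm
  have hparts := tsum_pow_mul_hitProb_by_parts hm hn 1
  have hshift := tsum_pow_mul_hitProb_by_shift hm hn 1
  simp only [pow_one, add_sub_cancel_left, one_mul, zero_add] at hparts hshift
  have hlin := tsum_linear_mul_survivalProb hm hn 1 (n + 1)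
  simp only [one_mul] at hlin
  rw [hparts, hlin, tsum_survivalProb hm hn, one_div, inv_pow] at hshift
  have : (m : ℝ) - 1 ≠ 0 := by linarith
  field_simp at hshift ⊢
  refine mul_left_cancel₀ (pow_ne_zero n (by positivity : (m : ℝ) ≠ 0)) ?_
  linear_combination -hshift

lemma tsum_mul_hitProb (hm : 2 ≤ m) (hn : 1 ≤ n) :
    ∑' k : ℕ, (k : ℝ) * hitProb m n k = m * ((m : ℝ) ^ n - 1) / (m - 1) := by
  simpa [tsum_survivalProb hm hn] using tsum_pow_mul_hitProb_by_parts hm hn 1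

lemma tsum_sq_mul_hitProb (hm : 2 ≤ m) (hn : 1 ≤ n) :
    ∑' k : ℕ, (k : ℝ) ^ 2 * hitProb m n k
      = 2 * ∑' k : ℕ, (k : ℝ) * survivalProb m n k + ∑' k, survivalProb m n k := by
  rw [tsum_pow_mul_hitProb_by_parts hm hn 2, ← one_mul (∑' k, survivalProb m n k),
    ← tsum_linear_mul_survivalProb hm hn, zero_pow two_ne_zero, zero_add]
  exact tsum_congr fun k => by ring

end

/-- For integers `m ≥ 2`, `n ≥ 1`, with `A` the `(n+1)×(n+1)` real matrix whose first row is
`(m-1, …, m-1, 0)` and whose row `i ≥ 1` has a single `1` in column `i-1`, and `W = (1/m)·A`,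
`(∑ₖ k²·(Wᵏ)_{n,0}) − (∑ₖ k·(Wᵏ)_{n,0})²` equals
`(m/(m−1)²)·(m^{2n+1} − (2n+1)·m^{n+1} + (2n+1)·mⁿ − 1)` (the variance of the string length). -/
theorem stmt_4 (m n : ℕ) (hm : 2 ≤ m) (hn : 1 ≤ n)
    (A W : Matrix (Fin (n + 1)) (Fin (n + 1)) ℝ)
    (hA : ∀ i j : Fin (n + 1), A i j =
      if (i : ℕ) = 0 then (if (j : ℕ) < n then (m : ℝ) - 1 else 0)
      else (if (j : ℕ) + 1 = (i : ℕ) then 1 else 0))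
    (hW : W = (1 / (m : ℝ)) • A) :
    (∑' k : ℕ, (k : ℝ) ^ 2 * (W ^ k) (Fin.last n) 0)
      - (∑' k : ℕ, (k : ℝ) * (W ^ k) (Fin.last n) 0) ^ 2
      = (m : ℝ) / ((m : ℝ) - 1) ^ 2 *
        ((m : ℝ) ^ (2 * n + 1) - (2 * (n : ℝ) + 1) * (m : ℝ) ^ (n + 1)
          + (2 * (n : ℝ) + 1) * (m : ℝ) ^ n - 1) := by
  obtain rfl : W = runMatrix m n := by rw [hW, runMatrix]; congr; exact Matrix.ext hA
  change ∑' k : ℕ, (k : ℝ) ^ 2 * hitProb m n k - (∑' k : ℕ, (k : ℝ) * hitProb m n k) ^ 2 = _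
  rw [tsum_sq_mul_hitProb hm hn, tsum_mul_hitProb hm hn, tsum_mul_survivalProb hm hn,
    tsum_survivalProb hm hn]
  have : (m : ℝ) - 1 ≠ 0 := by
    have : (2 : ℝ) ≤ m := by exact_mod_cast hm
    linarith
  field_simp
  ring
end

section
/- Let m ≥ 2 and n ≥ 1 be integers and let W = (1/m)·A, where A is the (n+1)×(n+1) real matrix with A 0 j = m−1 for 0 ≤ j ≤ n−1, A 0 n = 0, and for 1 ≤ i ≤ n: A i j = 1 if j = i−1 and 0 otherwise. Then every entry of W^k is nonnegative for every k, and the function k ↦ k²·(W^k)_{n,0} is summable over ℕ. -/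
/-!
`Wᵀ` is the substochastic transition matrix of the current run length: from a run of length
`j < n` the next letter resets it to `0` with probability `(m - 1)/m` and extends it with
probability `1/m`, and the chain stops at `n`. The expected waiting times `T` for completing the
run satisfy `T n = 0` and `T j = 1 + ((m - 1)/m) T 0 + (1/m) T (j + 1)`, so the positive vector
`w = T + 1` obeys `w ᵥ* W ≤ w - 1 ≤ c • w` with `c = 1 - 1 / w 0 < 1`. For a nonnegative matrix
this subinvariance gives `w i * (Wᵏ) i j ≤ cᵏ * w j`, a geometric bound on the entries of `Wᵏ`.
-/

namespace Matrix

section OrderedSemiring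

variable {ι R : Type*} [Fintype ι] [CommSemiring R] [PartialOrder R]
  [IsOrderedRing R] {W : Matrix ι ι R} {v : ι → R} {c : R}

theorem vecMul_le_vecMul_of_nonneg {u v : ι → R} (huv : u ≤ v) (hW : ∀ i j, 0 ≤ W i j) :
    u ᵥ* W ≤ v ᵥ* W :=
  fun j => dotProduct_le_dotProduct_of_nonneg_right huv fun i => hW i j

variable [DecidableEq ι]

theorem vecMul_pow_le_pow_smul (hW : ∀ i j, 0 ≤ W i j) (hc : 0 ≤ c) (hv : v ᵥ* W ≤ c • v)
    (k : ℕ) : v ᵥ* (W ^ k) ≤ c ^ k • v := by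
  induction k with
  | zero => simp
  | succ k ih =>
    calc v ᵥ* (W ^ (k + 1)) = v ᵥ* W ^ k ᵥ* W := by rw [pow_succ, vecMul_vecMul]
      _ ≤ (c ^ k • v) ᵥ* W := vecMul_le_vecMul_of_nonneg ih hW
      _ = c ^ k • v ᵥ* W := smul_vecMul _ _ _
      _ ≤ c ^ k • c • v := smul_le_smul_of_nonneg_left hv (pow_nonneg hc k)
      _ = c ^ (k + 1) • v := by rw [smul_smul, pow_succ]

theorem mul_pow_apply_le (hW : ∀ i j, 0 ≤ W i j) (hc : 0 ≤ c) (hv0 : 0 ≤ v)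
    (hv : v ᵥ* W ≤ c • v) (k : ℕ) (i j : ι) : v i * (W ^ k) i j ≤ c ^ k * v j :=
  calc v i * (W ^ k) i j ≤ ∑ l, v l * (W ^ k) l j :=
        Finset.single_le_sum (fun l _ => mul_nonneg (hv0 l) (pow_apply_nonneg hW k l j))
          (Finset.mem_univ i)
    _ = (v ᵥ* (W ^ k)) j := rfl
    _ ≤ c ^ k * v j := vecMul_pow_le_pow_smul hW hc hv k j

end OrderedSemiring

theorem summable_sq_mul_pow_apply {ι : Type*} [Fintype ι] [DecidableEq ι] {W : Matrix ι ι ℝ}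
    {v : ι → ℝ} {c : ℝ} (hW : ∀ i j, 0 ≤ W i j) (hc0 : 0 ≤ c) (hc1 : c < 1) (hv0 : 0 ≤ v)
    (hv : v ᵥ* W ≤ c • v) {i : ι} (hvi : 0 < v i) (j : ι) :
    Summable fun k : ℕ => (k : ℝ) ^ 2 * (W ^ k) i j := by
  have hgeom : Summable fun k : ℕ => v j / v i * ((k : ℝ) ^ 2 * c ^ k) :=
    (summable_pow_mul_geometric_of_norm_lt_one (R := ℝ) 2
      (by rwa [Real.norm_of_nonneg hc0])).mul_left _
  refine hgeom.of_nonneg_of_le (fun k => mul_nonneg (sq_nonneg _) (pow_apply_nonneg hW k i j))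
    fun k => ?_
  have hentry : (W ^ k) i j ≤ c ^ k * v j / v i :=
    (le_div_iff₀' hvi).2 (mul_pow_apply_le hW hc0 hv0 hv k i j)
  calc (k : ℝ) ^ 2 * (W ^ k) i j ≤ (k : ℝ) ^ 2 * (c ^ k * v j / v i) := by gcongr
    _ = v j / v i * ((k : ℝ) ^ 2 * c ^ k) := by ring

end Matrix

open Matrix

def runLengthMatrix (m : ℝ) (n : ℕ) : Matrix (Fin (n + 1)) (Fin (n + 1)) ℝ :=
  of fun i j => if (i : ℕ) = 0 then (if (j : ℕ) < n then m - 1 else 0)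
    else (if (j : ℕ) + 1 = (i : ℕ) then 1 else 0)

-- `runPotential m n j / (m - 1) - 1` is the expected number of further letters needed to complete
-- a run of `n`, starting from a current run of length `j`.
def runPotential (m : ℝ) (n : ℕ) (j : Fin (n + 1)) : ℝ := m ^ (n + 1) - m ^ ((j : ℕ) + 1) + (m - 1)

namespace runLengthMatrix

variable {m : ℝ} {n : ℕ}

theorem apply_nonneg (hm : 1 ≤ m) (i j : Fin (n + 1)) : 0 ≤ runLengthMatrix m n i j := by
  simp only [runLengthMatrix, of_apply]
  split_ifs <;> simp [hm]

theorem vecMul_apply_castSucc (w : Fin (n + 1) → ℝ) (j : Fin n) :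
    (w ᵥ* runLengthMatrix m n) j.castSucc = (m - 1) * w 0 + w j.succ := by
  simp only [vecMul, dotProduct, Fin.sum_univ_succ, runLengthMatrix, of_apply, Fin.val_zero,
    Fin.val_succ, Fin.val_castSucc, j.is_lt, Nat.succ_ne_zero, add_left_inj, Fin.val_inj,
    mul_ite, mul_one, mul_zero, Finset.sum_ite_eq, Finset.mem_univ, if_true, if_false]
  ring

theorem vecMul_apply_last (w : Fin (n + 1) → ℝ) :
    (w ᵥ* runLengthMatrix m n) (Fin.last n) = 0 := by
  refine Fintype.sum_eq_zero (fun i => w i * runLengthMatrix m n i (Fin.last n)) fun i => ?_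
  have hi : n + 1 ≠ (i : ℕ) := by omega
  simp only [runLengthMatrix, of_apply, Fin.val_last, lt_irrefl, if_false, if_neg hi,
    ite_self, mul_zero]

end runLengthMatrix

namespace runPotential

variable {m : ℝ} {n : ℕ}

theorem le_apply_zero (hm : 1 ≤ m) (j : Fin (n + 1)) :
    runPotential m n j ≤ runPotential m n 0 := by
  have : m ^ 1 ≤ m ^ ((j : ℕ) + 1) := pow_le_pow_right₀ hm (by omega)
  simp only [runPotential, Fin.val_zero, zero_add, pow_one] at this ⊢
  linarith

theorem pos (hm : 1 < m) (j : Fin (n + 1)) : 0 < runPotential m n j := by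
  have : m ^ ((j : ℕ) + 1) ≤ m ^ (n + 1) := pow_le_pow_right₀ hm.le (by omega)
  simp only [runPotential]
  linarith

theorem contraction_mem_Ico (hm : 1 < m) :
    1 - (m - 1) / (m ^ (n + 1) - 1) ∈ Set.Ico 0 1 := by
  have hM : m ^ 1 ≤ m ^ (n + 1) := pow_le_pow_right₀ hm.le (by omega)
  rw [pow_one] at hM
  constructor
  · rw [sub_nonneg, div_le_one (by linarith)]
    linarith
  · have : 0 < (m - 1) / (m ^ (n + 1) - 1) := div_pos (by linarith) (by linarith)
    linarith

theorem vecMul_le (hm : 1 < m) :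
    runPotential m n ᵥ* ((1 / m) • runLengthMatrix m n) ≤
      (1 - (m - 1) / (m ^ (n + 1) - 1)) • runPotential m n := by
  have hw0 : runPotential m n 0 = m ^ (n + 1) - 1 := by simp [runPotential]
  have hM0 : 0 < m ^ (n + 1) - 1 := hw0 ▸ pos hm 0
  intro j
  rw [vecMul_smul]
  induction j using Fin.lastCases with
  | last =>
    simp only [Pi.smul_apply, runLengthMatrix.vecMul_apply_last, smul_eq_mul, mul_zero]
    exact mul_nonneg (contraction_mem_Ico hm).1 (pos hm _).le
  | cast j =>
    simp only [Pi.smul_apply, runLengthMatrix.vecMul_apply_castSucc, smul_eq_mul]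
    have hstep : 1 / m * ((m - 1) * runPotential m n 0 + runPotential m n j.succ) =
        runPotential m n j.castSucc - (m - 1) := by
      simp only [runPotential, Fin.val_zero, Fin.val_succ, Fin.val_castSucc]
      field_simp
      ring
    have hdrop : (m - 1) / (m ^ (n + 1) - 1) * runPotential m n j.castSucc ≤ m - 1 :=
      calc (m - 1) / (m ^ (n + 1) - 1) * runPotential m n j.castSucc
          ≤ (m - 1) / (m ^ (n + 1) - 1) * runPotential m n 0 :=
            mul_le_mul_of_nonneg_left (le_apply_zero hm.le _) (div_nonneg (by linarith) hM0.le)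
        _ = m - 1 := by rw [hw0, div_mul_cancel₀ _ hM0.ne']
    rw [hstep]
    linarith

end runPotential

theorem stmt_17_general (m n : ℕ) (hm : 2 ≤ m)
    (A W : Matrix (Fin (n + 1)) (Fin (n + 1)) ℝ)
    (hA : ∀ i j : Fin (n + 1), A i j =
      if (i : ℕ) = 0 then (if (j : ℕ) < n then (m : ℝ) - 1 else 0)
      else (if (j : ℕ) + 1 = (i : ℕ) then 1 else 0))
    (hW : W = (1 / (m : ℝ)) • A) :
    (∀ (k : ℕ) (i j : Fin (n + 1)), 0 ≤ (W ^ k) i j) ∧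
      Summable (fun k : ℕ => (k : ℝ) ^ 2 * (W ^ k) (Fin.last n) 0) := by
  have hm' : (1 : ℝ) < m := by exact_mod_cast hm
  obtain rfl : W = (1 / (m : ℝ)) • runLengthMatrix m n := hW.trans (congrArg _ (Matrix.ext hA))
  have hW0 : ∀ i j, 0 ≤ ((1 / (m : ℝ)) • runLengthMatrix m n) i j := fun i j =>
    mul_nonneg (by positivity) (runLengthMatrix.apply_nonneg hm'.le i j)
  obtain ⟨hc0, hc1⟩ := runPotential.contraction_mem_Ico (n := n) hm'
  exact ⟨pow_apply_nonneg hW0, summable_sq_mul_pow_apply hW0 hc0 hc1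
    (fun j => (runPotential.pos hm' j).le) (runPotential.vecMul_le hm') (runPotential.pos hm' _) 0⟩

/-- For integers `m ≥ 2`, `n ≥ 1`, with `A` the `(n+1)×(n+1)` real matrix whose first row is
`(m-1, …, m-1, 0)` and whose row `i ≥ 1` has a single `1` in column `i-1`, and `W = (1/m)·A`,
every entry of `Wᵏ` is nonnegative for every `k`, and `k ↦ k²·(Wᵏ)_{n,0}` is summable. -/
theorem stmt_17 (m n : ℕ) (hm : 2 ≤ m) (hn : 1 ≤ n)
    (A W : Matrix (Fin (n + 1)) (Fin (n + 1)) ℝ)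
    (hA : ∀ i j : Fin (n + 1), A i j =
      if (i : ℕ) = 0 then (if (j : ℕ) < n then (m : ℝ) - 1 else 0)
      else (if (j : ℕ) + 1 = (i : ℕ) then 1 else 0))
    (hW : W = (1 / (m : ℝ)) • A) :
    (∀ (k : ℕ) (i j : Fin (n + 1)), 0 ≤ (W ^ k) i j) ∧
      Summable (fun k : ℕ => (k : ℝ) ^ 2 * (W ^ k) (Fin.last n) 0) :=
  stmt_17_general m n hm A W hA hW
end
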